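/- arXiv:1601.07443 — 3 statements merged into one kernel-verified Lean document; each statement's English description precedes it below -/
import Mathlib

section
/- Let Y ∈ ℂ^n be a random vector with independent components satisfying E{Y_i} = 0, E{Y_i Y_k} = 0, E{Y_i \overline{Y_k}} = δ_{ik}, and E{|Y_i|⁴} = 2 for all i,k. Let B be an n²×n² Hermitian matrix, X = B(Y ⊗ Y) ∈ ℂ^{n²}, and let A be any non-random n²×n² complex matrix. Then E{(A X, X)} = Tr(A B J B), where (·,·) is the Hermitian inner product on ℂ^{n²}. -/
open MeasureTheory ProbabilityTheory Matrix

/-- `J` is the `n² × n²` matrix with entries `J_{p,q} = δ_{p,q} + δ_{p̄,q}`, where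
`p̄ = (p₂, p₁)`. Multi-indices are modelled by `Fin n × Fin n`. -/
noncomputable def Jmat (n : ℕ) : Matrix (Fin n × Fin n) (Fin n × Fin n) ℂ :=
  fun p q => (if p = q then 1 else 0) + (if (p.2, p.1) = q then 1 else 0)

section AuxLemmas

variable {Ω : Type*} [MeasurableSpace Ω] {P : Measure Ω} [IsProbabilityMeasure P]

lemma indep_integral_mul {f g : Ω → ℂ} (h : IndepFun f g P)
    (hf : AEMeasurable f P) (hg : AEMeasurable g P) :
    ∫ ω, f ω * g ω ∂P = (∫ ω, f ω ∂P) * ∫ ω, g ω ∂P := by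
  have hmap := (indepFun_iff_map_prod_eq_prod_map_map hf hg).mp h
  have h1 : ∫ ω, f ω * g ω ∂P
      = ∫ z : ℂ × ℂ, (fun w => w) z.1 * (fun w => w) z.2 ∂(P.map fun ω => (f ω, g ω)) := by
    rw [integral_map (hf.prodMk hg) (f := fun z : ℂ × ℂ => (fun w => w) z.1 * (fun w => w) z.2)
      (measurable_fst.mul measurable_snd).aestronglyMeasurable]
  rw [h1, hmap, integral_prod_mul (f := fun w : ℂ => w) (g := fun w : ℂ => w),
    integral_map (f := fun w : ℂ => w) hf measurable_id.aestronglyMeasurable,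
    integral_map (f := fun w : ℂ => w) hg measurable_id.aestronglyMeasurable]

lemma aux_integral_prod {ι : Type*} {g : ι → Ω → ℂ} (hmeas : ∀ i, Measurable (g i))
    (hint : ∀ i, Integrable (g i) P)
    (hind : iIndepFun g P) (s : Finset ι) :
    Integrable (fun ω => ∏ i ∈ s, g i ω) P ∧
      ∫ ω, ∏ i ∈ s, g i ω ∂P = ∏ i ∈ s, ∫ ω, g i ω ∂P := by
  classical
  induction s using Finset.induction_on with
  | empty => exact ⟨by simpa using integrable_const (1:ℂ), by simp⟩
  | @insert i s hi ih =>
    have hprodmeas : Measurable (fun ω => ∏ j ∈ s, g j ω) := by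
      exact Finset.measurable_prod _ fun j _ => hmeas j
    have hindep : IndepFun (g i) (fun ω => ∏ j ∈ s, g j ω) P := by
      have h2 := (hind.indepFun_finsetProd_of_notMem hmeas hi).symm
      have : (∏ j ∈ s, g j) = fun ω => ∏ j ∈ s, g j ω := by
        funext ω; simp
      rwa [this] at h2
    constructor
    · have h3 : Integrable (g i * fun ω => ∏ j ∈ s, g j ω) P :=
        hindep.integrable_mul (hint i) ih.1
      have : (fun ω => ∏ j ∈ insert i s, g j ω)
          = g i * fun ω => ∏ j ∈ s, g j ω := by
        funext ω; simp [Finset.prod_insert hi]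
      rwa [this]
    · simp_rw [Finset.prod_insert hi]
      rw [indep_integral_mul hindep (hmeas i).aemeasurable hprodmeas.aemeasurable, ih.2]

lemma pow_le_one_add_pow_four {x : ℝ} (hx : 0 ≤ x) {u : ℕ} (hu : u ≤ 4) :
    x ^ u ≤ 1 + x ^ 4 := by
  rcases le_total x 1 with h | h
  · calc x ^ u ≤ 1 := pow_le_one₀ hx h
      _ ≤ 1 + x ^ 4 := le_add_of_nonneg_right (by positivity)
  · calc x ^ u ≤ x ^ 4 := pow_le_pow_right₀ h hu
      _ ≤ 1 + x ^ 4 := le_add_of_nonneg_left one_pos.le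

lemma key_moment {n : ℕ} {Y : Ω → Fin n → ℂ} (hYm : ∀ m, Measurable fun ω => Y ω m)
    (hYindep : iIndepFun (fun i ω => Y ω i) P)
    (hY1 : ∀ i, ∫ ω, Y ω i ∂P = 0)
    (hY2 : ∀ i k, ∫ ω, Y ω i * Y ω k ∂P = 0)
    (hY2' : ∀ i k, ∫ ω, Y ω i * (starRingEnd ℂ) (Y ω k) ∂P = if i = k then 1 else 0)
    (hY4 : ∀ i, ∫ ω, ‖Y ω i‖ ^ 4 ∂P = 2)
    (i j k l : Fin n) :
    Integrable (fun ω => Y ω i * Y ω j *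
      ((starRingEnd ℂ) (Y ω k) * (starRingEnd ℂ) (Y ω l))) P ∧
    ∫ ω, Y ω i * Y ω j * ((starRingEnd ℂ) (Y ω k) * (starRingEnd ℂ) (Y ω l)) ∂P =
      (if i = k ∧ j = l then 1 else 0) + (if j = k ∧ i = l then 1 else 0) := by
  classical
  set a : Fin n → ℕ := fun m => (if m = i then 1 else 0) + (if m = j then 1 else 0) with ha
  set b : Fin n → ℕ := fun m => (if m = k then 1 else 0) + (if m = l then 1 else 0) with hb
  set g : Fin n → Ω → ℂ :=
    fun m ω => Y ω m ^ a m * (starRingEnd ℂ) (Y ω m) ^ b m with hg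
  have hsingle : ∀ (x : Fin n → ℂ) (t : Fin n),
      (∏ m, x m ^ (if m = t then 1 else 0)) = x t := by
    intro x t
    rw [Finset.prod_eq_single t (fun m _ hm => by simp [hm]) (by simp)]
    simp
  have hprod : ∀ ω, (∏ m, g m ω) =
      Y ω i * Y ω j * ((starRingEnd ℂ) (Y ω k) * (starRingEnd ℂ) (Y ω l)) := by
    intro ω
    simp only [hg, ha, hb, pow_add, Finset.prod_mul_distrib, hsingle]
  have hconjm : ∀ m, Measurable fun ω => (starRingEnd ℂ) (Y ω m) := by
    intro m
    exact Complex.continuous_conj.measurable.comp (hYm m)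
  have hgmeas : ∀ m, Measurable (g m) := fun m =>
    ((hYm m).pow_const _).mul ((hconjm m).pow_const _)
  have h4 : ∀ m, Integrable (fun ω => ‖Y ω m‖ ^ 4) P := by
    intro m
    by_contra h
    have := hY4 m
    rw [integral_undef h] at this
    norm_num at this
  have hgint : ∀ m, Integrable (g m) P := by
    intro m
    refine Integrable.mono' ((integrable_const 1).add (h4 m))
      (hgmeas m).aestronglyMeasurable (Filter.Eventually.of_forall fun ω => ?_)
    have ham : a m ≤ 2 := by simp only [ha]; split_ifs <;> norm_num
    have hbm : b m ≤ 2 := by simp only [hb]; split_ifs <;> norm_num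
    calc ‖g m ω‖ = ‖Y ω m‖ ^ (a m + b m) := by
          simp [hg, norm_mul, norm_pow, pow_add]
      _ ≤ 1 + ‖Y ω m‖ ^ 4 := pow_le_one_add_pow_four (norm_nonneg _) (by omega)
  have hgind : iIndepFun g P := by
    exact hYindep.comp (fun m y => y ^ a m * (starRingEnd ℂ) y ^ b m)
      (fun m => (measurable_id.pow_const _).mul
        (Complex.continuous_conj.measurable.pow_const _))
  have H := aux_integral_prod hgmeas hgint hgind Finset.univ
  -- moment computations
  have hm00 : ∀ m, ∫ ω, Y ω m ^ (0:ℕ) * (starRingEnd ℂ) (Y ω m) ^ (0:ℕ) ∂P = 1 := by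
    intro m; simp
  have hm10 : ∀ m, ∫ ω, Y ω m ^ (1:ℕ) * (starRingEnd ℂ) (Y ω m) ^ (0:ℕ) ∂P = 0 := by
    intro m; simpa using hY1 m
  have hm01 : ∀ m, ∫ ω, Y ω m ^ (0:ℕ) * (starRingEnd ℂ) (Y ω m) ^ (1:ℕ) ∂P = 0 := by
    intro m
    simp only [pow_zero, one_mul, pow_one]
    rw [integral_conj, hY1 m, map_zero]
  have hm20 : ∀ m, ∫ ω, Y ω m ^ (2:ℕ) * (starRingEnd ℂ) (Y ω m) ^ (0:ℕ) ∂P = 0 := by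
    intro m
    simp only [pow_zero, mul_one, pow_two]
    exact hY2 m m
  have hm02 : ∀ m, ∫ ω, Y ω m ^ (0:ℕ) * (starRingEnd ℂ) (Y ω m) ^ (2:ℕ) ∂P = 0 := by
    intro m
    simp only [pow_zero, one_mul, pow_two, ← _root_.map_mul]
    rw [integral_conj]
    rw [show ∫ ω, Y ω m * Y ω m ∂P = 0 from hY2 m m, map_zero]
  have hm11 : ∀ m, ∫ ω, Y ω m ^ (1:ℕ) * (starRingEnd ℂ) (Y ω m) ^ (1:ℕ) ∂P = 1 := by
    intro m
    simpa using hY2' m m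
  have hm22 : ∀ m, ∫ ω, Y ω m ^ (2:ℕ) * (starRingEnd ℂ) (Y ω m) ^ (2:ℕ) ∂P = 2 := by
    intro m
    have hz : ∀ z : ℂ, z ^ 2 * (starRingEnd ℂ) z ^ 2 = ((‖z‖ ^ 4 : ℝ) : ℂ) := by
      intro z
      have h1 : z ^ 2 * (starRingEnd ℂ) z ^ 2 = (z * (starRingEnd ℂ) z) ^ 2 := by ring
      rw [h1, Complex.mul_conj]
      norm_cast
      rw [Complex.normSq_eq_norm_sq]
      ring
    simp_rw [hz]
    have h2 : ∫ ω, ((‖Y ω m‖ ^ 4 : ℝ) : ℂ) ∂P = ((∫ ω, ‖Y ω m‖ ^ 4 ∂P : ℝ) : ℂ) :=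
      integral_ofReal
    rw [h2, hY4 m]
    norm_num
  constructor
  · exact H.1.congr (Filter.Eventually.of_forall hprod)
  have hL : ∫ ω, Y ω i * Y ω j * ((starRingEnd ℂ) (Y ω k) * (starRingEnd ℂ) (Y ω l)) ∂P
      = ∏ m, ∫ ω, g m ω ∂P := by
    rw [← H.2]
    exact integral_congr_ae (Filter.Eventually.of_forall fun ω => (hprod ω).symm)
  rw [hL]
  have hc1 : ∀ m, ∫ ω, (starRingEnd ℂ) (Y ω m) ∂P = 0 := by
    intro m; rw [integral_conj, hY1 m, map_zero]
  have hc2 : ∀ m, ∫ ω, (starRingEnd ℂ) (Y ω m) ^ 2 ∂P = 0 := by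
    intro m; simpa using hm02 m
  have hr1 : ∀ m, ∫ ω, Y ω m ∂P = 0 := hY1
  have hd1 : ∀ m, ∫ ω, Y ω m * (starRingEnd ℂ) (Y ω m) ∂P = 1 := by
    intro m; simpa using hY2' m m
  simp only [hg, ha, hb]
  by_cases hij : j = i
  · by_cases hk : k = i
    · by_cases hl : l = i
      · -- all equal
        simp only [hij, hk, hl]
        rw [Finset.prod_eq_single i (fun m _ hm => by simp [hm]) (by simp)]
        norm_num [hm22 i]
      · -- j = i, k = i, l ≠ i : witness l
        have hil : ¬ i = l := fun h => hl h.symm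
        simp only [hij, hk]
        rw [Finset.prod_eq_zero (Finset.mem_univ l)
          (by norm_num [hl, hc1 l])]
        norm_num [hil]
    · -- j = i, k ≠ i : witness k
      have hik : ¬ i = k := fun h => hk h.symm
      by_cases hkl : l = k
      · simp only [hij, hkl]
        rw [Finset.prod_eq_zero (Finset.mem_univ k)
          (by norm_num [hk, hc2 k])]
        norm_num [hik]
      · have hkl' : ¬ k = l := fun h => hkl h.symm
        simp only [hij]
        rw [Finset.prod_eq_zero (Finset.mem_univ k)
          (by norm_num [hk, hkl', hc1 k])]
        norm_num [hik]
  · -- i ≠ j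
    have hij' : ¬ i = j := fun h => hij h.symm
    by_cases h1 : k = i ∧ l = j
    · obtain ⟨hk, hl⟩ := h1
      simp only [hk, hl]
      rw [Finset.prod_eq_one (fun m _ => ?_)]
      · norm_num [hij, hij']
      · by_cases hmi : m = i
        · have hmj : ¬ m = j := fun h => hij (h.symm.trans hmi)
          simp only [if_pos hmi, if_neg hmj, add_zero, zero_add]
          exact hm11 m
        · by_cases hmj : m = j
          · simp only [if_pos hmj, if_neg hmi, add_zero, zero_add]
            exact hm11 m
          · norm_num [hmi, hmj, hm00 m]
    · by_cases h2 : k = j ∧ l = i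
      · obtain ⟨hk, hl⟩ := h2
        simp only [hk, hl]
        rw [Finset.prod_eq_one (fun m _ => ?_)]
        · norm_num [hij, hij']
        · by_cases hmi : m = i
          · have hmj : ¬ m = j := fun h => hij (h.symm.trans hmi)
            simp only [if_pos hmi, if_neg hmj, add_zero, zero_add]
            exact hm11 m
          · by_cases hmj : m = j
            · simp only [if_pos hmj, if_neg hmi, add_zero, zero_add]
              exact hm11 m
            · norm_num [hmi, hmj, hm00 m]
      · -- no match : find a zero witness
        have hR : ((if i = k ∧ j = l then 1 else 0) + (if j = k ∧ i = l then 1 else 0) : ℂ) = 0 := by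
          rw [if_neg (fun h => h1 ⟨h.1.symm, h.2.symm⟩),
            if_neg (fun h => h2 ⟨h.1.symm, h.2.symm⟩)]
          norm_num
        rw [hR]
        by_cases hk : k = i
        · -- then ¬ l = j ; witness j
          have hlj : ¬ j = l := fun h => h1 ⟨hk, h.symm⟩
          have hji : ¬ j = i := hij
          have hjk : ¬ j = k := fun h => hji (h.trans hk)
          rw [Finset.prod_eq_zero (Finset.mem_univ j)
            (by norm_num [hji, hjk, hlj, hr1 j])]
        · by_cases hkj : k = j
          · have hli : ¬ i = l := fun h => h2 ⟨hkj, h.symm⟩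
            have hik : ¬ i = k := fun h => hk h.symm
            rw [Finset.prod_eq_zero (Finset.mem_univ i)
              (by norm_num [hij', hik, hli, hr1 i])]
          · by_cases hkl : k = l
            · rw [Finset.prod_eq_zero (Finset.mem_univ k)
                (by norm_num [hk, hkj, if_pos hkl, hc2 k])]
            · rw [Finset.prod_eq_zero (Finset.mem_univ k)
                (by norm_num [hk, hkj, hkl, hc1 k])]

end AuxLemmas

/-- expectation identity of Lemma 2(i). Let `Y ∈ ℂ^n` be a random vector with
independent components satisfying `E Y_i = 0`, `E (Y_i Y_k) = 0`, `E (Y_i conj Y_k) = δ_{ik}`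
and `E |Y_i|⁴ = 2`. Let `B` be an `n² × n²` Hermitian matrix, `X = B (Y ⊗ Y)`, and `A` any
non-random `n² × n²` matrix. Then `E (A X, X) = Tr(A B J B)`, where
`(A x, x) = ∑ i, (A x)_i conj x_i = star x ⬝ᵥ A.mulVec x`. -/
theorem expectation_quadratic_form {Ω : Type*} [MeasurableSpace Ω] (P : Measure Ω)
    [IsProbabilityMeasure P] (n : ℕ) (Y : Ω → Fin n → ℂ)
    (hYmeas : Measurable Y)
    (hYindep : iIndepFun (fun i ω => Y ω i) P)
    (hY1 : ∀ i, ∫ ω, Y ω i ∂P = 0)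
    (hY2 : ∀ i k, ∫ ω, Y ω i * Y ω k ∂P = 0)
    (hY2' : ∀ i k, ∫ ω, Y ω i * (starRingEnd ℂ) (Y ω k) ∂P = if i = k then 1 else 0)
    (hY4 : ∀ i, ∫ ω, ‖Y ω i‖ ^ 4 ∂P = 2)
    (B : Matrix (Fin n × Fin n) (Fin n × Fin n) ℂ) (hB : B.IsHermitian)
    (A : Matrix (Fin n × Fin n) (Fin n × Fin n) ℂ)
    (X : Ω → Fin n × Fin n → ℂ)
    (hX : ∀ ω, X ω = B.mulVec fun i => Y ω i.1 * Y ω i.2) :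
    ∫ ω, star (X ω) ⬝ᵥ A.mulVec (X ω) ∂P = (A * B * Jmat n * B).trace := by
  classical
  have hYm : ∀ m, Measurable fun ω => Y ω m := fun m => (measurable_pi_apply m).comp hYmeas
  have key := fun i j k l => key_moment (P := P) hYm hYindep hY1 hY2 hY2' hY4 i j k l
  set Z : Ω → Fin n × Fin n → ℂ := fun ω p => Y ω p.1 * Y ω p.2 with hZ
  have hint : ∀ r s : Fin n × Fin n, Integrable (fun ω => Z ω s * (starRingEnd ℂ) (Z ω r)) P := by
    intro r s
    refine (key s.1 s.2 r.1 r.2).1.congr (Filter.Eventually.of_forall fun ω => ?_)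
    simp [hZ, _root_.map_mul]
  have hval : ∀ r s : Fin n × Fin n, ∫ ω, Z ω s * (starRingEnd ℂ) (Z ω r) ∂P = Jmat n s r := by
    intro r s
    have h1 : (fun ω => Z ω s * (starRingEnd ℂ) (Z ω r))
        = fun ω => Y ω s.1 * Y ω s.2 *
          ((starRingEnd ℂ) (Y ω r.1) * (starRingEnd ℂ) (Y ω r.2)) := by
      funext ω; simp [hZ, _root_.map_mul]
    rw [h1, (key s.1 s.2 r.1 r.2).2]
    simp [Jmat, Prod.ext_iff]
  have hpt : ∀ ω, star (X ω) ⬝ᵥ A.mulVec (X ω) =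
      ∑ p, ∑ q, ∑ r, ∑ s,
        ((starRingEnd ℂ) (B p r) * A p q * B q s) * (Z ω s * (starRingEnd ℂ) (Z ω r)) := by
    intro ω
    rw [hX ω]
    simp only [dotProduct, mulVec, Pi.star_apply, RCLike.star_def, map_sum, _root_.map_mul,
      Finset.sum_mul, Finset.mul_sum]
    refine Finset.sum_congr rfl fun p _ => Finset.sum_congr rfl fun q _ => ?_
    rw [Finset.sum_comm]
    refine Finset.sum_congr rfl fun r _ =>
      Finset.sum_congr rfl fun s _ => by simp only [hZ, _root_.map_mul]; ring
  have I1 : ∀ (c : ℂ) (r s : Fin n × Fin n),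
      Integrable (fun ω => c * (Z ω s * (starRingEnd ℂ) (Z ω r))) P :=
    fun c r s => (hint r s).const_mul c
  have swap : ∫ ω, (∑ p, ∑ q, ∑ r, ∑ s,
        ((starRingEnd ℂ) (B p r) * A p q * B q s) * (Z ω s * (starRingEnd ℂ) (Z ω r))) ∂P
      = ∑ p, ∑ q, ∑ r, ∑ s,
        ((starRingEnd ℂ) (B p r) * A p q * B q s) * ∫ ω, Z ω s * (starRingEnd ℂ) (Z ω r) ∂P := by
    rw [integral_finset_sum _ (fun p _ => integrable_finset_sum _ fun q _ =>
      integrable_finset_sum _ fun r _ => integrable_finset_sum _ fun s _ => I1 _ r s)]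
    refine Finset.sum_congr rfl fun p _ => ?_
    rw [integral_finset_sum _ (fun q _ => integrable_finset_sum _ fun r _ =>
      integrable_finset_sum _ fun s _ => I1 _ r s)]
    refine Finset.sum_congr rfl fun q _ => ?_
    rw [integral_finset_sum _ (fun r _ => integrable_finset_sum _ fun s _ => I1 _ r s)]
    refine Finset.sum_congr rfl fun r _ => ?_
    rw [integral_finset_sum _ (fun s _ => I1 _ r s)]
    exact Finset.sum_congr rfl fun s _ => integral_const_mul _ _
  calc ∫ ω, star (X ω) ⬝ᵥ A.mulVec (X ω) ∂P
      = ∫ ω, (∑ p, ∑ q, ∑ r, ∑ s,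
          ((starRingEnd ℂ) (B p r) * A p q * B q s) * (Z ω s * (starRingEnd ℂ) (Z ω r))) ∂P :=
        integral_congr_ae (Filter.Eventually.of_forall hpt)
    _ = ∑ p, ∑ q, ∑ r, ∑ s,
          ((starRingEnd ℂ) (B p r) * A p q * B q s) * Jmat n s r := by
        rw [swap]
        exact Finset.sum_congr rfl fun p _ => Finset.sum_congr rfl fun q _ =>
          Finset.sum_congr rfl fun r _ => Finset.sum_congr rfl fun s _ => by rw [hval r s]
    _ = (A * B * Jmat n * B).trace := by
        have hBH : ∀ p r, (starRingEnd ℂ) (B p r) = B r p := fun p r => by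
          have := congrFun (congrFun hB r) p
          simpa [Matrix.conjTranspose_apply] using this
        simp only [hBH, Matrix.trace, Matrix.diag_apply, Matrix.mul_apply,
          Finset.sum_mul, Finset.mul_sum]
        refine Finset.sum_congr rfl fun p _ => ?_
        rw [Finset.sum_comm]
        refine Finset.sum_congr rfl fun r _ => ?_
        rw [Finset.sum_comm]
        exact Finset.sum_congr rfl fun s _ => Finset.sum_congr rfl fun q _ => by ring
end

section
/- Let M₁ and M₂ be n×n Hermitian matrices and let N₁ and N₂ be the Normalized Counting Measures of their eigenvalues. Then for any interval Δ ⊂ ℝ, |N₁(Δ) − N₂(Δ)| ≤ rank(M₁ − M₂)/n. -/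
open MeasureTheory Matrix
open scoped ENNReal

/-- The Normalized Counting Measure of eigenvalues of a Hermitian matrix: it assigns to each
set the number of eigenvalues in it (with multiplicity) divided by the size of the matrix.
(For non-Hermitian matrices we set it to `0`.) -/
noncomputable def NCM {ι : Type*} [Fintype ι] [DecidableEq ι] (A : Matrix ι ι ℂ) :
    Measure ℝ := by
  classical
  exact if hA : A.IsHermitian then
    (Fintype.card ι : ℝ≥0∞)⁻¹ • ∑ i, Measure.dirac (hA.eigenvalues i)
  else 0

open Finset in
/-- Key "moment" contradiction: two finitely supported nonnegative weight families, one carried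
on points inside an order-connected set and one on points outside it, cannot have equal total
mass, equal first moments and equal second moments when the mass is positive. -/
theorem moment_contradiction {ι κ : Type*} [Fintype ι] [Fintype κ] {Δ : Set ℝ}
    (hΔ : Δ.OrdConnected) (lam : ι → ℝ) (mu : κ → ℝ) (p : ι → ℝ) (q : κ → ℝ)
    (hp : ∀ i, 0 ≤ p i) (hq : ∀ j, 0 ≤ q j)
    (hlam : ∀ i, p i ≠ 0 → lam i ∈ Δ) (hmu : ∀ j, q j ≠ 0 → mu j ∉ Δ)
    (ht : ∑ i, p i = ∑ j, q j) (htpos : 0 < ∑ i, p i)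
    (h1 : ∑ i, lam i * p i = ∑ j, mu j * q j)
    (h2 : ∑ i, lam i ^ 2 * p i = ∑ j, mu j ^ 2 * q j) : False := by
  classical
  have hne : ∃ i, p i ≠ 0 := by
    by_contra h
    push_neg at h
    simp [h] at htpos
  have hne' : (univ.filter fun i => p i ≠ 0).Nonempty := by
    obtain ⟨i, hi⟩ := hne
    exact ⟨i, by simp [hi]⟩
  obtain ⟨i₀, hi₀mem, ha⟩ := (univ.filter fun i => p i ≠ 0).exists_min_image lam hne'
  obtain ⟨i₁, hi₁mem, hb⟩ := (univ.filter fun i => p i ≠ 0).exists_max_image lam hne'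
  set a := lam i₀ with ha_def
  set b := lam i₁ with hb_def
  have haΔ : a ∈ Δ := hlam i₀ (by simpa using hi₀mem)
  have hbΔ : b ∈ Δ := hlam i₁ (by simpa using hi₁mem)
  have hmem : ∀ i, p i ≠ 0 → lam i ∈ Set.Icc a b := fun i hi =>
    ⟨ha i (by simp [hi]), hb i (by simp [hi])⟩
  have hout : ∀ j, q j ≠ 0 → (mu j - a) * (mu j - b) > 0 := by
    intro j hj
    have h1 : mu j ∉ Set.Icc a b := fun hmem' => hmu j hj (hΔ.out haΔ hbΔ hmem')
    rcases lt_or_ge (mu j) a with h | h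
    · have hab : a ≤ b := hb i₀ hi₀mem
      nlinarith
    · have : b < mu j := by
        by_contra hh
        push_neg at hh
        exact h1 ⟨h, hh⟩
      have hab : a ≤ b := ha i₁ hi₁mem
      nlinarith
  have key₁ : ∑ i, lam i ^ 2 * p i ≤ (a + b) * (∑ i, lam i * p i) - a * b * ∑ i, p i := by
    rw [mul_sum, mul_sum, ← sum_sub_distrib]
    apply sum_le_sum
    intro i _
    by_cases hi : p i = 0
    · simp [hi]
    · have h := hmem i hi
      have hp' := (hp i).lt_of_ne (Ne.symm hi)
      nlinarith [mul_nonneg (mul_nonneg (sub_nonneg.2 h.1) (sub_nonneg.2 h.2)) hp'.le]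
  have key₂ : (a + b) * (∑ j, mu j * q j) - a * b * ∑ j, q j < ∑ j, mu j ^ 2 * q j := by
    rw [mul_sum, mul_sum, ← sum_sub_distrib]
    have hqne : ∃ j, q j ≠ 0 := by
      by_contra h
      push_neg at h
      rw [ht] at htpos
      simp [h] at htpos
    obtain ⟨j₀, hj₀⟩ := hqne
    apply sum_lt_sum
    · intro j _
      by_cases hj : q j = 0
      · simp [hj]
      · have h := hout j hj
        have hq' := (hq j).lt_of_ne (Ne.symm hj)
        nlinarith [mul_nonneg h.le hq'.le]
    · refine ⟨j₀, mem_univ _, ?_⟩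
      have h := hout j₀ hj₀
      have hq' := (hq j₀).lt_of_ne (Ne.symm hj₀)
      nlinarith [mul_pos h hq']
  rw [h1, ht] at key₁
  rw [h2] at key₁
  linarith

theorem toEuclideanLin_eigenvectorBasis {n : ℕ} {A : Matrix (Fin n) (Fin n) ℂ}
    (hA : A.IsHermitian) (i : Fin n) :
    toEuclideanLin A (hA.eigenvectorBasis i) = (hA.eigenvalues i : ℂ) • hA.eigenvectorBasis i := by
  have h := hA.mulVec_eigenvectorBasis i
  apply (WithLp.equiv 2 _).injective
  simp only [toEuclideanLin_apply]
  simp only [WithLp.equiv_apply, WithLp.ofLp_toLp, WithLp.ofLp_smul]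
  ext j
  have h2 := congrFun h j
  simp only [Pi.smul_apply, smul_eq_mul] at h2 ⊢
  rw [h2]
  norm_num [Complex.real_smul]

theorem repr_toEuclideanLin {n : ℕ} {A : Matrix (Fin n) (Fin n) ℂ} (hA : A.IsHermitian)
    (v : EuclideanSpace ℂ (Fin n)) (i : Fin n) :
    hA.eigenvectorBasis.repr (toEuclideanLin A v) i
      = (hA.eigenvalues i : ℂ) * hA.eigenvectorBasis.repr v i := by
  rw [OrthonormalBasis.repr_apply_apply, OrthonormalBasis.repr_apply_apply]
  have hsym : (toEuclideanLin A).IsSymmetric := (isHermitian_iff_isSymmetric).1 hA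
  rw [← hsym (hA.eigenvectorBasis i) v, toEuclideanLin_eigenvectorBasis hA i,
    inner_smul_left]
  simp [Complex.conj_ofReal]

theorem inner_eq_sum_repr {n : ℕ} (b : OrthonormalBasis (Fin n) ℂ (EuclideanSpace ℂ (Fin n)))
    (x y : EuclideanSpace ℂ (Fin n)) :
    (inner ℂ x y : ℂ) = ∑ i, (starRingEnd ℂ) (b.repr x i) * b.repr y i := by
  rw [← b.repr.inner_map_map x y, PiLp.inner_apply]
  refine Finset.sum_congr rfl fun i _ => ?_
  simp [RCLike.inner_apply, mul_comm]

open Submodule in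
theorem finrank_span_onb_image {n : ℕ}
    (b : OrthonormalBasis (Fin n) ℂ (EuclideanSpace ℂ (Fin n)))
    (s : Set (Fin n)) [DecidablePred (· ∈ s)] :
    Module.finrank ℂ (span ℂ (⇑b '' s)) = (Finset.univ.filter (· ∈ s)).card := by
  classical
  have hli : LinearIndependent ℂ (⇑b) := by
    have := b.toBasis.linearIndependent
    rwa [OrthonormalBasis.coe_toBasis] at this
  have hinj : Function.Injective ⇑b := hli.injective
  have hli2 : LinearIndependent ℂ ((↑) : (⇑b '' s) → EuclideanSpace ℂ (Fin n)) := by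
    have h3 : LinearIndependent ℂ (⇑b ∘ (Subtype.val : s → Fin n)) :=
      hli.comp Subtype.val Subtype.val_injective
    have h4 := (linearIndepOn_id_range_iff h3.injective).2 h3
    have : Set.range (⇑b ∘ (Subtype.val : s → Fin n)) = ⇑b '' s := by
      rw [Set.range_comp, Subtype.range_coe]
    rwa [this] at h4
  rw [finrank_span_set_eq_card hli2]
  rw [Set.toFinset_image, Finset.card_image_of_injective _ hinj]
  congr 1
  ext i
  simp

open Finset Submodule in
set_option maxHeartbeats 1000000 in
/-- The number of eigenvalues (with multiplicity) of `M₁` in an order-connected set `Δ` exceeds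
that of `M₂` by at most `rank (M₁ - M₂)`. -/
theorem count_le_count_add_rank {n : ℕ} (M₁ M₂ : Matrix (Fin n) (Fin n) ℂ)
    (h₁ : M₁.IsHermitian) (h₂ : M₂.IsHermitian) {Δ : Set ℝ} (hΔ : Δ.OrdConnected)
    [DecidablePred (· ∈ Δ)] :
    (Finset.univ.filter fun i => h₁.eigenvalues i ∈ Δ).card
      ≤ (Finset.univ.filter fun i => h₂.eigenvalues i ∈ Δ).card + (M₁ - M₂).rank := by
  classical
  set E := EuclideanSpace ℂ (Fin n)
  set b₁ := h₁.eigenvectorBasis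
  set b₂ := h₂.eigenvectorBasis
  set I₁ : Set (Fin n) := {i | h₁.eigenvalues i ∈ Δ} with hI₁
  set I₂ : Set (Fin n) := {i | h₂.eigenvalues i ∈ Δ} with hI₂
  set S₁ : Submodule ℂ E := span ℂ (⇑b₁ '' I₁) with hS₁
  set S₂ : Submodule ℂ E := span ℂ (⇑b₂ '' I₂ᶜ) with hS₂
  set D : E →ₗ[ℂ] E := toEuclideanLin (M₁ - M₂) with hD
  set W : Submodule ℂ E := LinearMap.ker D with hW
  -- the triple intersection is trivial
  have htriv : S₁ ⊓ S₂ ⊓ W = ⊥ := by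
    rw [Submodule.eq_bot_iff]
    rintro v ⟨⟨hv1, hv2⟩, hvW⟩
    by_contra hv0
    have hT : toEuclideanLin M₁ v = toEuclideanLin M₂ v := by
      have : D v = 0 := hvW
      rw [hD, map_sub] at this
      have := sub_eq_zero.mp this
      exact this
    set c : Fin n → ℂ := fun i => b₁.repr v i with hc
    set d : Fin n → ℂ := fun j => b₂.repr v j with hd
    have supp₁ : ∀ i, h₁.eigenvalues i ∉ Δ → c i = 0 := by
      intro i hi
      have hmem : v ∈ span ℂ (⇑b₁.toBasis '' I₁) := by
        rwa [OrthonormalBasis.coe_toBasis]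
      rw [Module.Basis.mem_span_image] at hmem
      have : i ∉ (b₁.toBasis.repr v).support := fun h => hi (hmem h)
      rw [Finsupp.notMem_support_iff] at this
      rw [hc]
      simp only [← OrthonormalBasis.coe_toBasis_repr_apply]
      exact this
    have supp₂ : ∀ j, h₂.eigenvalues j ∈ Δ → d j = 0 := by
      intro j hj
      have hmem : v ∈ span ℂ (⇑b₂.toBasis '' I₂ᶜ) := by
        rwa [OrthonormalBasis.coe_toBasis]
      rw [Module.Basis.mem_span_image] at hmem
      have : j ∉ (b₂.toBasis.repr v).support := fun h => (hmem h) hj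
      rw [Finsupp.notMem_support_iff] at this
      rw [hd]
      simp only [← OrthonormalBasis.coe_toBasis_repr_apply]
      exact this
    set p : Fin n → ℝ := fun i => Complex.normSq (c i) with hp
    set q : Fin n → ℝ := fun j => Complex.normSq (d j) with hq
    have conj_mul : ∀ z : ℂ, (starRingEnd ℂ) z * z = (Complex.normSq z : ℂ) := by
      intro z; rw [mul_comm, Complex.mul_conj]
    have momA : (∑ i, (p i : ℂ)) = ∑ j, (q j : ℂ) := by
      have e1 := inner_eq_sum_repr b₁ v v
      have e2 := inner_eq_sum_repr b₂ v v
      rw [e1] at e2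
      simpa only [conj_mul] using e2
    have momB : (∑ i, ((h₁.eigenvalues i * p i : ℝ) : ℂ))
        = ∑ j, ((h₂.eigenvalues j * q j : ℝ) : ℂ) := by
      have e1 := inner_eq_sum_repr b₁ v (toEuclideanLin M₁ v)
      have e2 := inner_eq_sum_repr b₂ v (toEuclideanLin M₂ v)
      have e3 : ∑ i, (starRingEnd ℂ) (b₁.repr v i) * b₁.repr (toEuclideanLin M₁ v) i
          = ∑ j, (starRingEnd ℂ) (b₂.repr v j) * b₂.repr (toEuclideanLin M₂ v) j := by
        rw [← e1, ← e2, hT]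
      calc (∑ i, ((h₁.eigenvalues i * p i : ℝ) : ℂ))
          = ∑ i, (starRingEnd ℂ) (b₁.repr v i) * b₁.repr (toEuclideanLin M₁ v) i := by
            apply Finset.sum_congr rfl
            intro i _
            rw [repr_toEuclideanLin h₁, mul_left_comm, conj_mul]
            show ((h₁.eigenvalues i * p i : ℝ) : ℂ) = _
            push_cast
            ring
        _ = ∑ j, (starRingEnd ℂ) (b₂.repr v j) * b₂.repr (toEuclideanLin M₂ v) j := e3
        _ = ∑ j, ((h₂.eigenvalues j * q j : ℝ) : ℂ) := by
            apply Finset.sum_congr rfl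
            intro j _
            rw [repr_toEuclideanLin h₂, mul_left_comm, conj_mul]
            show _ = ((h₂.eigenvalues j * q j : ℝ) : ℂ)
            push_cast
            ring
    have momC : (∑ i, ((h₁.eigenvalues i ^ 2 * p i : ℝ) : ℂ))
        = ∑ j, ((h₂.eigenvalues j ^ 2 * q j : ℝ) : ℂ) := by
      have e1 := inner_eq_sum_repr b₁ (toEuclideanLin M₁ v) (toEuclideanLin M₁ v)
      have e2 := inner_eq_sum_repr b₂ (toEuclideanLin M₂ v) (toEuclideanLin M₂ v)
      have e3 : ∑ i, (starRingEnd ℂ) (b₁.repr (toEuclideanLin M₁ v) i)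
            * b₁.repr (toEuclideanLin M₁ v) i
          = ∑ j, (starRingEnd ℂ) (b₂.repr (toEuclideanLin M₂ v) j)
            * b₂.repr (toEuclideanLin M₂ v) j := by
        rw [← e1, ← e2, hT]
      calc (∑ i, ((h₁.eigenvalues i ^ 2 * p i : ℝ) : ℂ))
          = ∑ i, (starRingEnd ℂ) (b₁.repr (toEuclideanLin M₁ v) i)
              * b₁.repr (toEuclideanLin M₁ v) i := by
            apply Finset.sum_congr rfl
            intro i _
            rw [conj_mul, repr_toEuclideanLin h₁, Complex.normSq_mul, Complex.normSq_ofReal]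
            show ((h₁.eigenvalues i ^ 2 * p i : ℝ) : ℂ) = _
            push_cast
            ring
        _ = ∑ j, (starRingEnd ℂ) (b₂.repr (toEuclideanLin M₂ v) j)
              * b₂.repr (toEuclideanLin M₂ v) j := e3
        _ = ∑ j, ((h₂.eigenvalues j ^ 2 * q j : ℝ) : ℂ) := by
            apply Finset.sum_congr rfl
            intro j _
            rw [conj_mul, repr_toEuclideanLin h₂, Complex.normSq_mul, Complex.normSq_ofReal]
            show _ = ((h₂.eigenvalues j ^ 2 * q j : ℝ) : ℂ)
            push_cast
            ring
    have momA' : ∑ i, p i = ∑ j, q j := by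
      have := momA
      push_cast at this
      exact_mod_cast this
    have momB' : ∑ i, h₁.eigenvalues i * p i = ∑ j, h₂.eigenvalues j * q j := by
      have := momB
      push_cast at this
      exact_mod_cast this
    have momC' : ∑ i, h₁.eigenvalues i ^ 2 * p i = ∑ j, h₂.eigenvalues j ^ 2 * q j := by
      have := momC
      push_cast at this
      exact_mod_cast this
    have htpos : 0 < ∑ i, p i := by
      rcases (Finset.sum_nonneg fun i _ => Complex.normSq_nonneg (c i)).lt_or_eq with h | h
      · exact h
      · exfalso
        apply hv0
        have hzero : ∀ i ∈ Finset.univ, p i = 0 := by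
          rw [← Finset.sum_eq_zero_iff_of_nonneg fun i _ => Complex.normSq_nonneg (c i)]
          exact h.symm
        have : b₁.repr v = 0 := by
          ext i
          have := hzero i (Finset.mem_univ i)
          rw [hp] at this
          simpa [Complex.normSq_eq_zero] using this
        have := congrArg b₁.repr.symm this
        simpa using this
    exact moment_contradiction hΔ h₁.eigenvalues h₂.eigenvalues p q
      (fun i => Complex.normSq_nonneg _) (fun j => Complex.normSq_nonneg _)
      (fun i hi => by
        by_contra h
        exact hi (by rw [hp]; simp [supp₁ i h]))
      (fun j hj => by
        intro h
        exact hj (by rw [hq]; simp [supp₂ j h]))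
      momA' htpos momB' momC'
  -- dimension count
  have hE : Module.finrank ℂ E = n := finrank_euclideanSpace_fin
  have f1 : Module.finrank ℂ S₁ = (Finset.univ.filter fun i => h₁.eigenvalues i ∈ Δ).card := by
    rw [hS₁, finrank_span_onb_image]
    congr 1
  have f2 : Module.finrank ℂ S₂ = (Finset.univ.filter fun j => h₂.eigenvalues j ∉ Δ).card := by
    rw [hS₂, finrank_span_onb_image]
    congr 1
  have f3 : (Finset.univ.filter fun j => h₂.eigenvalues j ∈ Δ).card
      + (Finset.univ.filter fun j => h₂.eigenvalues j ∉ Δ).card = n := by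
    rw [Finset.card_filter_add_card_filter_not]
    simp
  have fW : (M₁ - M₂).rank + Module.finrank ℂ W = n := by
    have h := LinearMap.finrank_range_add_finrank_ker D
    rw [hE] at h
    have hrank : (M₁ - M₂).rank = Module.finrank ℂ (LinearMap.range D) :=
      rank_eq_finrank_range_toLin (M₁ - M₂) (PiLp.basisFun 2 ℂ (Fin n))
        (PiLp.basisFun 2 ℂ (Fin n))
    rw [hrank]
    exact h
  have g1 : Module.finrank ℂ (S₁ ⊔ S₂ : Submodule ℂ E) + Module.finrank ℂ (S₁ ⊓ S₂ : Submodule ℂ E)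
      = Module.finrank ℂ S₁ + Module.finrank ℂ S₂ :=
    Submodule.finrank_sup_add_finrank_inf_eq S₁ S₂
  have g2 : Module.finrank ℂ ((S₁ ⊓ S₂) ⊔ W : Submodule ℂ E)
      + Module.finrank ℂ ((S₁ ⊓ S₂) ⊓ W : Submodule ℂ E)
      = Module.finrank ℂ (S₁ ⊓ S₂ : Submodule ℂ E) + Module.finrank ℂ W :=
    Submodule.finrank_sup_add_finrank_inf_eq _ W
  have g3 : Module.finrank ℂ ((S₁ ⊓ S₂) ⊓ W : Submodule ℂ E) = 0 := by
    rw [htriv]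
    exact finrank_bot ℂ E
  have g4 : Module.finrank ℂ (S₁ ⊔ S₂ : Submodule ℂ E) ≤ n := by
    have := Submodule.finrank_le (S₁ ⊔ S₂)
    rwa [hE] at this
  have g5 : Module.finrank ℂ ((S₁ ⊓ S₂) ⊔ W : Submodule ℂ E) ≤ n := by
    have := Submodule.finrank_le ((S₁ ⊓ S₂) ⊔ W)
    rwa [hE] at this
  omega

theorem NCM_apply_toReal {n : ℕ} {A : Matrix (Fin n) (Fin n) ℂ} (hA : A.IsHermitian)
    {Δ : Set ℝ} (hΔ : MeasurableSet Δ) [DecidablePred (· ∈ Δ)] :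
    ((NCM A) Δ).toReal
      = ((Finset.univ.filter fun i => hA.eigenvalues i ∈ Δ).card : ℝ) / n := by
  classical
  rw [NCM, dif_pos hA]
  rw [Measure.smul_apply, smul_eq_mul]
  have h1 : (∑ i, Measure.dirac (hA.eigenvalues i)) Δ
      = ∑ i, (Measure.dirac (hA.eigenvalues i)) Δ := by
    simp [Measure.finset_sum_apply]
  rw [h1]
  have h2 : ∀ i : Fin n, (Measure.dirac (hA.eigenvalues i)) Δ
      = if hA.eigenvalues i ∈ Δ then 1 else 0 := by
    intro i
    rw [Measure.dirac_apply' _ hΔ]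
    by_cases h : hA.eigenvalues i ∈ Δ <;> simp [Set.indicator, h]
  simp_rw [h2]
  rw [Finset.sum_boole, Fintype.card_fin]
  rw [ENNReal.toReal_mul, ENNReal.toReal_inv, ENNReal.toReal_natCast, ENNReal.toReal_natCast,
    div_eq_inv_mul]

/-- Let `M₁`, `M₂` be `n × n` Hermitian matrices and `N₁`, `N₂` the normalized
counting measures of their eigenvalues. Then for every interval `Δ ⊆ ℝ`,
`|N₁(Δ) − N₂(Δ)| ≤ rank (M₁ − M₂) / n`. -/
theorem ncm_diff_le_rank_div {n : ℕ} (M₁ M₂ : Matrix (Fin n) (Fin n) ℂ)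
    (h₁ : M₁.IsHermitian) (h₂ : M₂.IsHermitian)
    (Δ : Set ℝ) (hΔ : Δ.OrdConnected) :
    |((NCM M₁) Δ).toReal - ((NCM M₂) Δ).toReal| ≤ ((M₁ - M₂).rank : ℝ) / n := by
  classical
  rw [NCM_apply_toReal h₁ hΔ.measurableSet, NCM_apply_toReal h₂ hΔ.measurableSet]
  set c₁ := (Finset.univ.filter fun i => h₁.eigenvalues i ∈ Δ).card with hc₁
  set c₂ := (Finset.univ.filter fun i => h₂.eigenvalues i ∈ Δ).card with hc₂
  have k1 : c₁ ≤ c₂ + (M₁ - M₂).rank := count_le_count_add_rank M₁ M₂ h₁ h₂ hΔ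
  have k2 : c₂ ≤ c₁ + (M₁ - M₂).rank := by
    have h := count_le_count_add_rank M₂ M₁ h₂ h₁ hΔ
    have hr : (M₂ - M₁).rank = (M₁ - M₂).rank := by
      have hneg : M₂ - M₁ = -(M₁ - M₂) := (neg_sub _ _).symm
      have hmv : (-(M₁ - M₂)).mulVecLin = -(M₁ - M₂).mulVecLin := by
        ext x
        simp [Matrix.neg_mulVec]
      rw [Matrix.rank, Matrix.rank, hneg, hmv, LinearMap.range_neg]
    rwa [hr] at h
  have habs : |(c₁ : ℝ) - c₂| ≤ ((M₁ - M₂).rank : ℝ) := by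
    rw [abs_sub_le_iff]
    constructor
    · have : (c₁ : ℝ) ≤ c₂ + (M₁ - M₂).rank := by exact_mod_cast k1
      linarith
    · have : (c₂ : ℝ) ≤ c₁ + (M₁ - M₂).rank := by exact_mod_cast k2
      linarith
  rw [div_sub_div_same]
  rw [div_eq_mul_inv, div_eq_mul_inv]
  calc |((c₁ : ℝ) - c₂) * (n : ℝ)⁻¹| = |(c₁ : ℝ) - c₂| * (n : ℝ)⁻¹ := by
        rw [abs_mul, abs_inv, Nat.abs_cast]
    _ ≤ ((M₁ - M₂).rank : ℝ) * (n : ℝ)⁻¹ :=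
        mul_le_mul_of_nonneg_right habs (inv_nonneg.2 (Nat.cast_nonneg n))
end

section
/- Let X^1,…,X^m ∈ ℂ^N, let M = N^{-1} Σ_{μ=1}^m X^μ (X^μ)^*, fix z with Im z ≠ 0, let G = (M − z)^{-1}, and for each μ let G^μ = (M − N^{-1} X^μ (X^μ)^* − z)^{-1}. Then for every N×N matrix K, N^{-1} Tr(K G M) = N^{-2} Σ_{μ=1}^m (K G^μ X^μ, X^μ) / ( 1 + N^{-1} (G^μ X^μ, X^μ) ). -/
open Matrix

namespace TraceAux

variable {n : ℕ}

lemma vecMulVec_mulVec' (u w v : Fin n → ℂ) :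
    (vecMulVec u w).mulVec v = (w ⬝ᵥ v) • u := by
  funext i
  simp [vecMulVec_apply, mulVec, dotProduct, Finset.mul_sum, mul_comm, mul_left_comm, mul_assoc]

lemma conj_quadForm (A : Matrix (Fin n) (Fin n) ℂ) (v : Fin n → ℂ) :
    star (star v ⬝ᵥ A.mulVec v) = star v ⬝ᵥ Aᴴ.mulVec v := by
  rw [star_dotProduct, star_star, star_mulVec, ← dotProduct_mulVec]

lemma quad_im (H : Matrix (Fin n) (Fin n) ℂ) (hH : Hᴴ = H) (z : ℂ) (v : Fin n → ℂ) :
    (star ((H - z • 1).mulVec v) ⬝ᵥ v).im = z.im * ∑ i, Complex.normSq (v i) := by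
  have h1 : star ((H - z • 1).mulVec v) ⬝ᵥ v
      = star v ⬝ᵥ (H - z • 1)ᴴ.mulVec v := by
    rw [star_mulVec, ← dotProduct_mulVec]
  have h2 : (H - z • 1)ᴴ = H - (starRingEnd ℂ z) • 1 := by
    simp [conjTranspose_smul, hH]
  have h3 : star v ⬝ᵥ v = ((∑ i, Complex.normSq (v i) : ℝ) : ℂ) := by
    simp [dotProduct, Complex.normSq_eq_conj_mul_self]
  have h4 : (star v ⬝ᵥ H.mulVec v).im = 0 := by
    have := conj_quadForm H v
    rw [hH] at this
    have him := congrArg Complex.im this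
    simp at him
    linarith
  rw [h1, h2, sub_mulVec, dotProduct_sub, smul_mulVec, one_mulVec,
    dotProduct_smul, h3]
  simp [Complex.sub_im, Complex.mul_im, h4]

lemma det_unit (H : Matrix (Fin n) (Fin n) ℂ) (hH : Hᴴ = H) (z : ℂ) (hz : z.im ≠ 0) :
    IsUnit (H - z • 1).det := by
  rw [isUnit_iff_ne_zero]
  intro hdet
  obtain ⟨v, hv, hker⟩ := (Matrix.exists_mulVec_eq_zero_iff).2 hdet
  have := quad_im H hH z v
  rw [hker] at this
  simp at this
  rcases this with h | h
  · exact hz h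
  · apply hv
    funext i
    have hnn : ∀ i ∈ Finset.univ, (0:ℝ) ≤ Complex.normSq (v i) := fun i _ => Complex.normSq_nonneg _
    have := (Finset.sum_eq_zero_iff_of_nonneg hnn).1 h i (Finset.mem_univ i)
    simpa using Complex.normSq_eq_zero.1 this

lemma trace_mul_vecMulVec (P : Matrix (Fin n) (Fin n) ℂ) (u w : Fin n → ℂ) :
    (P * vecMulVec u w).trace = w ⬝ᵥ P.mulVec u := by
  simp [Matrix.trace, Matrix.mul_apply, vecMulVec_apply, Matrix.diag, dotProduct,
    mulVec, Finset.mul_sum, mul_comm, mul_left_comm]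

end TraceAux

/-- For `X^1, …, X^m ∈ ℂ^N`, `M = N⁻¹ ∑_μ X^μ (X^μ)*`, `Im z ≠ 0`,
`G = (M − z)⁻¹`, `G^μ = (M − N⁻¹ X^μ (X^μ)* − z)⁻¹`, and any `N × N` matrix `K`:
`N⁻¹ Tr(K G M) = N⁻² ∑_μ (K G^μ X^μ, X^μ) / (1 + N⁻¹ (G^μ X^μ, X^μ))`,
where `(A x, x) = star x ⬝ᵥ A.mulVec x`. -/
theorem trace_KGM_rank_one_decomposition {N m : ℕ} (X : Fin m → Fin N → ℂ) (z : ℂ)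
    (hz : z.im ≠ 0)
    (M : Matrix (Fin N) (Fin N) ℂ)
    (hM : M = (N : ℝ)⁻¹ • ∑ μ, Matrix.vecMulVec (X μ) (star (X μ)))
    (G : Matrix (Fin N) (Fin N) ℂ) (hG : G = (M - z • 1)⁻¹)
    (Gμ : Fin m → Matrix (Fin N) (Fin N) ℂ)
    (hGμ : ∀ μ, Gμ μ = (M - (N : ℝ)⁻¹ • Matrix.vecMulVec (X μ) (star (X μ)) - z • 1)⁻¹)
    (K : Matrix (Fin N) (Fin N) ℂ) :
    (N : ℂ)⁻¹ * (K * G * M).trace =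
      (N : ℂ)⁻¹ ^ 2 * ∑ μ, (star (X μ) ⬝ᵥ (K * Gμ μ).mulVec (X μ)) /
        (1 + (N : ℂ)⁻¹ * (star (X μ) ⬝ᵥ (Gμ μ).mulVec (X μ))) := by
  rcases Nat.eq_zero_or_pos N with hN0 | hN0
  · subst hN0
    simp [Matrix.trace, dotProduct]
  have hNc : Complex.ofReal ((N : ℝ)⁻¹) = (N : ℂ)⁻¹ := by push_cast; ring
  -- Hermitian facts
  have hvH : ∀ u : Fin N → ℂ, (vecMulVec u (star u))ᴴ = vecMulVec u (star u) := by
    intro u; ext i j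
    simp [conjTranspose_apply, vecMulVec_apply, mul_comm]
  have hMH : Mᴴ = M := by
    rw [hM, conjTranspose_smul, star_trivial, conjTranspose_sum]
    congr 1
    exact Finset.sum_congr rfl fun μ _ => hvH (X μ)
  set A : Fin m → Matrix (Fin N) (Fin N) ℂ :=
    fun μ => M - (N : ℝ)⁻¹ • vecMulVec (X μ) (star (X μ)) with hA
  have hAH : ∀ μ, (A μ)ᴴ = A μ := by
    intro μ
    rw [hA]
    simp only [conjTranspose_sub, hMH, conjTranspose_smul, star_trivial]
    rw [hvH (X μ)]
  -- invertibility
  have hdetM : IsUnit (M - z • 1).det := TraceAux.det_unit M hMH z hz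
  have hdetA : ∀ μ, IsUnit (A μ - z • 1).det := fun μ => TraceAux.det_unit _ (hAH μ) z hz
  have hGinv : G * (M - z • 1) = 1 := by rw [hG]; exact Matrix.nonsing_inv_mul _ hdetM
  have hGμinv : ∀ μ, (A μ - z • 1) * Gμ μ = 1 := fun μ => by
    rw [hGμ μ]; exact Matrix.mul_nonsing_inv _ (hdetA μ)
  set v : Fin m → Fin N → ℂ := fun μ => (Gμ μ).mulVec (X μ) with hv
  have hxv : ∀ μ, (A μ - z • 1).mulVec (v μ) = X μ := by
    intro μ
    rw [hv]
    simp only [mulVec_mulVec, hGμinv μ, one_mulVec]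
  set d : Fin m → ℂ := fun μ => star (X μ) ⬝ᵥ (Gμ μ).mulVec (X μ) with hd
  set c : Fin m → ℂ := fun μ => 1 + (N : ℂ)⁻¹ * d μ with hc
  have hdim : ∀ μ, (d μ).im = z.im * ∑ i, Complex.normSq (v μ i) := by
    intro μ
    have : d μ = star ((A μ - z • 1).mulVec (v μ)) ⬝ᵥ v μ := by rw [hxv μ]
    rw [this]
    exact TraceAux.quad_im _ (hAH μ) z (v μ)
  have hcne : ∀ μ, c μ ≠ 0 := by
    intro μ
    by_cases hr : ∑ i, Complex.normSq (v μ i) = 0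
    · have hv0 : v μ = 0 := by
        funext i
        have hnn : ∀ i ∈ Finset.univ, (0:ℝ) ≤ Complex.normSq (v μ i) :=
          fun i _ => Complex.normSq_nonneg _
        have := (Finset.sum_eq_zero_iff_of_nonneg hnn).1 hr i (Finset.mem_univ i)
        simpa using Complex.normSq_eq_zero.1 this
      have hd0 : d μ = 0 := by
        rw [hd]
        show star (X μ) ⬝ᵥ v μ = 0
        rw [hv0]
        simp
      simp [hc, hd0]
    · intro h0
      have him : (c μ).im = 0 := by rw [h0]; simp
      rw [hc] at him
      simp only [Complex.add_im, Complex.one_im, zero_add] at him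
      rw [← hNc] at him
      have him2 : (N:ℝ)⁻¹ * (d μ).im = 0 := by
        simpa [Complex.mul_im] using him
      rw [hdim μ] at him2
      have hrpos : (0:ℝ) < ∑ i, Complex.normSq (v μ i) := by
        rcases lt_or_eq_of_le (Finset.sum_nonneg fun i _ => Complex.normSq_nonneg (v μ i)) with h | h
        · exact h
        · exact absurd h.symm hr
      have hNne : ((N:ℝ))⁻¹ ≠ 0 := by positivity
      exact (mul_ne_zero hNne (mul_ne_zero hz (ne_of_gt hrpos))) him2
  -- Sherman-Morrison
  have hMz : ∀ μ, (M - z • 1).mulVec (v μ) = c μ • X μ := by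
    intro μ
    have hsplit : M - z • 1 = (A μ - z • 1) + (N : ℝ)⁻¹ • vecMulVec (X μ) (star (X μ)) := by
      rw [hA]
      show M - z • 1 = (M - _ - z • 1) + _
      rw [sub_right_comm, sub_add_cancel]
    rw [hsplit, add_mulVec, hxv μ, smul_mulVec, TraceAux.vecMulVec_mulVec']
    have hdv : star (X μ) ⬝ᵥ v μ = d μ := rfl
    rw [hdv]
    funext i
    simp only [Pi.add_apply, Pi.smul_apply, smul_eq_mul, hc, add_smul, one_smul,
      Complex.real_smul, hNc]
    ring
  have hGX : ∀ μ, G.mulVec (X μ) = (c μ)⁻¹ • v μ := by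
    intro μ
    have h1 : G.mulVec ((M - z • 1).mulVec (v μ)) = v μ := by
      rw [mulVec_mulVec, hGinv, one_mulVec]
    rw [hMz μ, mulVec_smul] at h1
    rw [← h1, smul_smul, inv_mul_cancel₀ (hcne μ), one_smul]
  -- trace computation
  have htr : (K * G * M).trace
      = (N : ℂ)⁻¹ * ∑ μ, (c μ)⁻¹ * (star (X μ) ⬝ᵥ (K * Gμ μ).mulVec (X μ)) := by
    rw [hM, Matrix.mul_smul, Matrix.mul_sum, trace_smul, trace_sum]
    rw [Complex.real_smul, hNc]
    congr 1
    apply Finset.sum_congr rfl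
    intro μ _
    rw [TraceAux.trace_mul_vecMulVec]
    rw [← mulVec_mulVec, hGX μ, mulVec_smul, dotProduct_smul]
    rw [hv]
    simp only [mulVec_mulVec, smul_eq_mul]
  rw [htr]
  rw [sq, mul_assoc]
  congr 1
  congr 1
  apply Finset.sum_congr rfl
  intro μ _
  rw [div_eq_mul_inv, mul_comm]
end
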